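/- Lemma 2.4: With the combinatorial setup (M, ≻, base S): let (i,j) ∈ S be such that there is no (ĩ, j̃) ∈ S with ĩ < i and j̃ > j. Suppose R_a < i ≤ R_{a+1} and R_{b-1} < j ≤ R_b for some a, b. Then i = R_a + 1 or j = R_b. -/

import Mathlib

/-- `i` and `j` lie in the same diagonal block of the composition with partial sums `R`. -/
def SameBlock (R : ℕ → ℕ) (s i j : ℕ) : Prop :=
  ∃ k, 1 ≤ k ∧ k ≤ s ∧ R (k-1) < i ∧ i ≤ R k ∧ R (k-1) < j ∧ j ≤ R k

/-- The set `M` of matrix positions strictly above the block diagonal. -/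
def Mset (R : ℕ → ℕ) (s : ℕ) : Set (ℕ × ℕ) :=
  {p | 1 ≤ p.1 ∧ p.1 < p.2 ∧ p.2 ≤ R s ∧ ¬ SameBlock R s p.1 p.2}

/-- The relation `p ≻ q` on `M`. -/
def Succ (R : ℕ → ℕ) (s : ℕ) (p q : ℕ × ℕ) : Prop :=
  (p.1 = q.1 ∧ q.2 < p.2 ∧ SameBlock R s q.2 p.2) ∨
  (p.2 = q.2 ∧ p.1 < q.1 ∧ SameBlock R s p.1 q.1)

/-- `S` is a base of `M`: an antichain under `≻` such that every element of `M \ S`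
dominates some element of `S`. -/
def IsBase (R : ℕ → ℕ) (s : ℕ) (S : Set (ℕ × ℕ)) : Prop :=
  S ⊆ Mset R s ∧
  (∀ p ∈ S, ∀ q ∈ S, p ≠ q → ¬ Succ R s p q ∧ ¬ Succ R s q p) ∧
  (∀ γ ∈ Mset R s \ S, ∃ ξ ∈ S, Succ R s γ ξ)

/-!
Inside a rectangle (block × block) of `M`, `≻` moves right along a row or up along a column.
A base never contains a point `(x, j)` strictly south-east of another point `(i, y)` of it in the
same rectangle: the corner `(x, y)` is dominated by `(x, j)`, so lies outside the base and must
dominate a base point further left or further down, which `(x, j)` or `(i, y)` then dominates.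
Hence with `(i + 1, j)` the base also contains `(i, j + 1)` whenever both stay in the rectangle,
so a base point with no base point to its north-east lies in the top row or the rightmost column.
-/

section Blocks

variable {R : ℕ → ℕ} {s : ℕ}

theorem monotoneOn_Iic_of_lt_add_one (hmono : ∀ k < s, R k < R (k + 1)) :
    MonotoneOn R (Set.Iic s) :=
  (strictMonoOn_Iic_of_lt_succ fun m hm => by simpa using hmono m hm).monotoneOn

theorem SameBlock.symm {x y : ℕ} (h : SameBlock R s x y) : SameBlock R s y x := by
  obtain ⟨k, hk1, hks, hx1, hx2, hy1, hy2⟩ := h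
  exact ⟨k, hk1, hks, hy1, hy2, hx1, hx2⟩

theorem SameBlock.of_le_of_le {x y z : ℕ} (h : SameBlock R s x z) (hxy : x ≤ y) (hyz : y ≤ z) :
    SameBlock R s x y := by
  obtain ⟨k, hk1, hks, hx1, hx2, hz1, hz2⟩ := h
  exact ⟨k, hk1, hks, hx1, hx2, by omega, by omega⟩

theorem SameBlock.le_partialSum (hmono : ∀ k < s, R k < R (k + 1)) {x y : ℕ}
    (h : SameBlock R s x y) : y ≤ R s := by
  obtain ⟨k, -, hks, -, -, -, hy⟩ := h
  exact hy.trans (monotoneOn_Iic_of_lt_add_one hmono hks Set.self_mem_Iic hks)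

theorem SameBlock.trans (hmono : ∀ k < s, R k < R (k + 1)) {x y z : ℕ}
    (hxy : SameBlock R s x y) (hyz : SameBlock R s y z) : SameBlock R s x z := by
  obtain ⟨k, hk1, hks, hx1, hx2, hy1, hy2⟩ := hxy
  obtain ⟨l, -, hls, hy1', hy2', hz1, hz2⟩ := hyz
  have hR := monotoneOn_Iic_of_lt_add_one hmono
  obtain rfl : k = l := by
    by_contra hne
    rcases Nat.lt_or_gt_of_ne hne with hkl | hlk
    · have := hR (show k ≤ s by omega) (show l - 1 ≤ s by omega) (show k ≤ l - 1 by omega)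
      omega
    · have := hR (show l ≤ s by omega) (show k - 1 ≤ s by omega) (show l ≤ k - 1 by omega)
      omega
  exact ⟨k, hk1, hks, hx1, hx2, hz1, hz2⟩

theorem Succ.ne {p q : ℕ × ℕ} (h : Succ R s p q) : p ≠ q := by
  rintro rfl
  rcases h with ⟨-, h, -⟩ | ⟨-, h, -⟩ <;> exact lt_irrefl _ h

end Blocks

namespace IsBase

variable {R : ℕ → ℕ} {s : ℕ} {S : Set (ℕ × ℕ)}

theorem not_succ (hS : IsBase R s S) {p q : ℕ × ℕ} (hp : p ∈ S) (hq : q ∈ S) :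
    ¬ Succ R s p q :=
  fun h => (hS.2.1 p hp q hq h.ne).1 h

theorem southeast_not_mem (hS : IsBase R s S) (hmono : ∀ k < s, R k < R (k + 1))
    {i x y j : ℕ} (hiy : (i, y) ∈ S) (hix : i < x) (hix' : SameBlock R s i x)
    (hyj : y < j) (hyj' : SameBlock R s y j) : (x, j) ∉ S := by
  intro hxj
  obtain ⟨hi1, hiy_lt, -, hiy_nb⟩ := hS.1 hiy
  obtain ⟨-, hxj_lt, hjs, -⟩ := hS.1 hxj
  have hxy : x < y := by
    by_contra! hyx
    exact hiy_nb (hix'.of_le_of_le hiy_lt.le hyx)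
  have hcorner : (x, y) ∈ Mset R s :=
    ⟨by dsimp only; omega, hxy, by dsimp only; omega, fun h => hiy_nb (hix'.trans hmono h)⟩
  have hcorner_succ : Succ R s (x, j) (x, y) := Or.inl ⟨rfl, hyj, hyj'⟩
  have hcorner_not_mem : (x, y) ∉ S := fun h => hS.not_succ hxj h hcorner_succ
  obtain ⟨⟨w, z⟩, hwz, hsucc⟩ := hS.2.2 _ ⟨hcorner, hcorner_not_mem⟩
  rcases hsucc with ⟨rfl, hzy, hzy'⟩ | ⟨rfl, hxw, hxw'⟩
  · exact hS.not_succ hxj hwz (Or.inl ⟨rfl, hzy.trans hyj, hzy'.trans hmono hyj'⟩)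
  · exact hS.not_succ hiy hwz (Or.inr ⟨rfl, hix.trans hxw, hix'.trans hmono hxw'⟩)

theorem northeast_mem (hS : IsBase R s S) (hmono : ∀ k < s, R k < R (k + 1)) {i j : ℕ}
    (hij : (i + 1, j) ∈ S) (hi : SameBlock R s i (i + 1)) (hj : SameBlock R s j (j + 1)) :
    (i, j + 1) ∈ S := by
  obtain ⟨-, hij_lt, -, hij_nb⟩ := hS.1 hij
  have hi_pos : 1 ≤ i := by
    obtain ⟨k, -, -, h, -⟩ := hi
    omega
  have hM : (i, j + 1) ∈ Mset R s :=
    ⟨by dsimp only; omega, by dsimp only; omega, hj.le_partialSum hmono,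
      fun h => hij_nb (hi.symm.trans hmono (h.trans hmono hj.symm))⟩
  by_contra hnot
  obtain ⟨⟨x, y⟩, hxy, hsucc⟩ := hS.2.2 _ ⟨hM, hnot⟩
  rcases hsucc with ⟨rfl, hyj, hyj'⟩ | ⟨rfl, hix, hix'⟩
  · dsimp only at hyj hyj'
    rcases (Nat.lt_add_one_iff.mp hyj).eq_or_lt with rfl | hyj
    · exact hS.not_succ hxy hij (Or.inr ⟨rfl, i.lt_add_one, hi⟩)
    · exact hS.southeast_not_mem hmono hxy i.lt_add_one hi hyj
        (hyj'.of_le_of_le hyj.le j.le_succ) hij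
  · dsimp only at hix hix'
    rcases (Nat.succ_le_of_lt hix).eq_or_lt with rfl | hix
    · exact hS.not_succ hxy hij (Or.inl ⟨rfl, j.lt_add_one, hj⟩)
    · exact hS.southeast_not_mem hmono hij hix (hi.symm.trans hmono hix') j.lt_add_one hj hxy

end IsBase

theorem lemma_2_4_general (s : ℕ) (R : ℕ → ℕ)
    (hmono : ∀ k < s, R k < R (k+1))
    (S : Set (ℕ × ℕ)) (hS : IsBase R s S)
    (i j a b : ℕ) (hij : (i, j) ∈ S)
    (hmax : ¬ ∃ p ∈ S, p.1 < i ∧ j < p.2)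
    (ha : a + 1 ≤ s) (hb1 : 1 ≤ b) (hb2 : b ≤ s)
    (hi1 : R a < i) (hi2 : i ≤ R (a+1))
    (hj1 : R (b-1) < j) (hj2 : j ≤ R b) :
    i = R a + 1 ∨ j = R b := by
  by_contra! hnot
  obtain ⟨hi, hj⟩ := hnot
  have hi_block : SameBlock R s (i - 1) (i - 1 + 1) :=
    ⟨a + 1, by omega, ha, by simp only [Nat.add_sub_cancel]; omega, by omega,
      by simp only [Nat.add_sub_cancel]; omega, by omega⟩
  have hj_block : SameBlock R s j (j + 1) := ⟨b, hb1, hb2, hj1, hj2, by omega, by omega⟩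
  have hij' : (i - 1 + 1, j) ∈ S := by rwa [Nat.sub_add_cancel (by omega)]
  exact hmax ⟨_, hS.northeast_mem hmono hij' hi_block hj_block, by dsimp only; omega, by simp⟩

theorem lemma_2_4 (n s : ℕ) (hn : 1 ≤ n) (hs : 1 ≤ s) (R : ℕ → ℕ)
    (hR0 : R 0 = 0) (hmono : ∀ k < s, R k < R (k+1)) (hRs : R s = n)
    (S : Set (ℕ × ℕ)) (hS : IsBase R s S)
    (i j a b : ℕ) (hij : (i, j) ∈ S)
    (hmax : ¬ ∃ p ∈ S, p.1 < i ∧ j < p.2)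
    (ha : a + 1 ≤ s) (hb1 : 1 ≤ b) (hb2 : b ≤ s)
    (hi1 : R a < i) (hi2 : i ≤ R (a+1))
    (hj1 : R (b-1) < j) (hj2 : j ≤ R b) :
    i = R a + 1 ∨ j = R b :=
  lemma_2_4_general s R hmono S hS i j a b hij hmax ha hb1 hb2 hi1 hi2 hj1 hj2
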